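/- If λ < 0 and γ < 0, then the zero solution is stable: for every ε ∈ (0,d0] there exist δ > 0 and t1 ≥ t0 such that every admissible solution with v(t1) ≤ δ satisfies 0 ≤ v(t) ≤ ε for all t ≥ t1. -/

import Mathlib

/-!
Take a level `b ≤ ε` so small, and a time `t₁` so large, that `M (b + t^{-1/q})` stays below
`min (-γ) (-λ)` for `t ≥ t₁`. Then whenever an admissible solution touches the level `b`, the
remainder `ρ` is dominated by the two dissipative terms `γ t^{-m/q} b^s` and `λ t^{-n/q} b`, so
`v' < 0` there: a solution starting below `b` at `t₁` can never cross it.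
-/

/-- An admissible solution of the reduced equation
`v'(t) = γ·t^{−m/q}·v(t)^s + λ·t^{−n/q}·v(t) + ρ(t)` on `[t0,∞)` with values in
`[0,d0]`, where `|ρ(t)| ≤ M·(t^{−m/q}·v(t)^s + t^{−n/q}·v(t))·(v(t) + t^{−1/q})`. -/
def IsAdmissible (q m n s : ℕ) (γ lam d0 t0 M : ℝ) (v : ℝ → ℝ) : Prop :=
  (∀ t ≥ t0, v t ∈ Set.Icc (0:ℝ) d0) ∧
  ∃ ρ : ℝ → ℝ,
    (∀ t ≥ t0, |ρ t| ≤
      M * (t ^ (-(m:ℝ)/(q:ℝ)) * v t ^ s + t ^ (-(n:ℝ)/(q:ℝ)) * v t)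
        * (v t + t ^ (-(1:ℝ)/(q:ℝ)))) ∧
    (∀ t ≥ t0, HasDerivAt v
      (γ * t ^ (-(m:ℝ)/(q:ℝ)) * v t ^ s + lam * t ^ (-(n:ℝ)/(q:ℝ)) * v t + ρ t) t)

theorem le_const_of_hasDerivAt_neg_at_level {f f' : ℝ → ℝ} {a b : ℝ}
    (hf : ∀ x ≥ a, HasDerivAt f (f' x) x) (hlevel : ∀ x ≥ a, f x = b → f' x < 0)
    (ha : f a ≤ b) : ∀ t ≥ a, f t ≤ b := fun _ ht =>
  image_le_of_deriv_right_lt_deriv_boundary (B := fun _ => b)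
    (fun x hx => (hf x hx.1).continuousAt.continuousWithinAt)
    (fun x hx => (hf x hx.1).hasDerivWithinAt) ha (fun _ => hasDerivAt_const _ b)
    (fun x hx => hlevel x hx.1) (Set.right_mem_Icc.mpr ht)

theorem rpow_neg_one_div_le_of_inv_pow_le {q : ℕ} (hq : q ≠ 0) {η x : ℝ} (hη : 0 < η)
    (hx : η⁻¹ ^ q ≤ x) :
    x ^ (-(1:ℝ) / q) ≤ η := by
  have hexp : -(1:ℝ) / q = -(q:ℝ)⁻¹ := by rw [neg_div, one_div]
  calc x ^ (-(1:ℝ) / q) ≤ (η⁻¹ ^ q) ^ (-(1:ℝ) / q) :=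
        Real.rpow_le_rpow_of_nonpos (by positivity) hx
          (div_nonpos_of_nonpos_of_nonneg (by norm_num) q.cast_nonneg)
    _ = η := by
        rw [hexp, Real.rpow_neg (by positivity), Real.pow_rpow_inv_natCast (by positivity) hq,
          inv_inv]

theorem add_add_lt_zero_of_abs_le {γ lam M P Q b τ ρ : ℝ} (s : ℕ) (hP : 0 < P) (hQ : 0 < Q)
    (hb : 0 < b) (hsmall : M * (b + τ) < min (-γ) (-lam))
    (hρ : |ρ| ≤ M * (P * b ^ s + Q * b) * (b + τ)) :
    γ * P * b ^ s + lam * Q * b + ρ < 0 := by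
  have hPb : 0 < P * b ^ s := by positivity
  have hQb : 0 < Q * b := by positivity
  have hγ : M * (b + τ) * (P * b ^ s) < -γ * (P * b ^ s) :=
    mul_lt_mul_of_pos_right (hsmall.trans_le (min_le_left _ _)) hPb
  have hlam : M * (b + τ) * (Q * b) < -lam * (Q * b) :=
    mul_lt_mul_of_pos_right (hsmall.trans_le (min_le_right _ _)) hQb
  nlinarith [le_abs_self ρ]

namespace IsAdmissible

variable {q m n s : ℕ} {γ lam d0 t0 M : ℝ} {v : ℝ → ℝ}

theorem nonneg (hv : IsAdmissible q m n s γ lam d0 t0 M v) {t : ℝ} (ht : t0 ≤ t) : 0 ≤ v t :=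
  (hv.1 t ht).1

theorem le_of_le_of_small (hv : IsAdmissible q m n s γ lam d0 t0 M v) {t1 b : ℝ}
    (ht1 : t0 ≤ t1) (ht1_pos : 0 < t1) (hb : 0 < b)
    (hsmall : ∀ x ≥ t1, M * (b + x ^ (-(1:ℝ) / q)) < min (-γ) (-lam)) (hvb : v t1 ≤ b) :
    ∀ t ≥ t1, v t ≤ b := by
  obtain ⟨-, ρ, hρ, hderiv⟩ := hv
  refine le_const_of_hasDerivAt_neg_at_level (fun x hx => hderiv x (ht1.trans hx)) ?_ hvb
  intro x hx hvx
  have hx_pos : 0 < x := ht1_pos.trans_le hx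
  have hρx := hρ x (ht1.trans hx)
  rw [hvx] at hρx ⊢
  exact add_add_lt_zero_of_abs_le s (Real.rpow_pos_of_pos hx_pos _)
    (Real.rpow_pos_of_pos hx_pos _) hb (hsmall x hx) hρx

end IsAdmissible

theorem stability_of_zero_nonlinear_case_general
    (q m n s : ℕ) (hq : 0 < q)
    (γ lam d0 t0 M : ℝ) (hγ : γ < 0) (hlam : lam < 0)
    (hM : 0 < M) :
    ∀ ε ∈ Set.Ioc (0:ℝ) d0, ∃ δ > 0, ∃ t1 ≥ t0,
      ∀ v : ℝ → ℝ, IsAdmissible q m n s γ lam d0 t0 M v → v t1 ≤ δ →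
        ∀ t ≥ t1, 0 ≤ v t ∧ v t ≤ ε := by
  rintro ε ⟨hε, -⟩
  set k := min (-γ) (-lam)
  have hk : 0 < k := lt_min (neg_pos.mpr hγ) (neg_pos.mpr hlam)
  set η := k / (4 * M)
  have hη : 0 < η := by positivity
  set δ := min ε η
  have hδ : 0 < δ := lt_min hε hη
  set t1 := max t0 (η⁻¹ ^ q)
  have ht1_pos : 0 < t1 := lt_max_of_lt_right (by positivity)
  have hsmall : ∀ x ≥ t1, M * (δ + x ^ (-(1:ℝ) / q)) < k := fun x hx => by
    have hτ := rpow_neg_one_div_le_of_inv_pow_le hq.ne' hη ((le_max_right _ _).trans hx)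
    have hMη : M * (2 * η) = k / 2 := by simp only [η]; field_simp; ring
    nlinarith [min_le_right ε η]
  refine ⟨δ, hδ, t1, le_max_left _ _, fun v hv hvt1 t ht => ⟨?_, ?_⟩⟩
  · exact hv.nonneg ((le_max_left _ _).trans ht)
  · exact (hv.le_of_le_of_small (le_max_left _ _) ht1_pos hδ hsmall hvt1 t ht).trans
      (min_le_left _ _)

/-- if `λ < 0` and `γ < 0` the zero solution is stable. -/
theorem stability_of_zero_nonlinear_case
    (q m n s : ℕ) (hq : 0 < q) (hm : 0 < m) (hmn : m < n) (hs : 2 ≤ s)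
    (γ lam d0 t0 M : ℝ) (hγ : γ < 0) (hlam : lam < 0)
    (hd0 : 0 < d0) (ht0 : 0 < t0) (hM : 0 < M) :
    ∀ ε ∈ Set.Ioc (0:ℝ) d0, ∃ δ > 0, ∃ t1 ≥ t0,
      ∀ v : ℝ → ℝ, IsAdmissible q m n s γ lam d0 t0 M v → v t1 ≤ δ →
        ∀ t ≥ t1, 0 ≤ v t ∧ v t ≤ ε :=
  stability_of_zero_nonlinear_case_general q m n s hq γ lam d0 t0 M hγ hlam hM
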